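/- arXiv:1107.5239 — 4 statements merged into one kernel-verified Lean document; each statement's English description precedes it below -/
import Mathlib

section
/- Let ρ = (ρ₁,…,ρ_q) be a real vector with |ρᵢ| < 1 for all i, and let V be a real symmetric positive definite q×q matrix. Define the q×q matrix S by S_{ij} = V_{ij} / (1 − ρᵢ ρ_j). Then S is symmetric positive definite, and S − diag(ρ) S diag(ρ) = V (equivalently, V equals the Hadamard product (1·1ᵀ − ρ ρᵀ) ∘ S). -/
/-!
The marginal scale is the stationary solution of the Stein equation `S = V + F S Fᵀ`, namely
`S = ∑ₖ Fᵏ V Fᵏ` for `F = diag(ρ)`: entrywise this is `V i j ∑ₖ (ρ i ρ j)ᵏ`, a geometric series.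
Every term of the series is positive semidefinite and the term `k = 0` is `V` itself, so the
sum is positive definite.
-/

open Matrix
open scoped ComplexOrder

namespace Matrix

variable {ι n 𝕜 : Type*} [Fintype n]

theorem hasSum_star_dotProduct_mulVec [RCLike 𝕜] {A : ι → Matrix n n 𝕜} {S : Matrix n n 𝕜}
    (hA : HasSum A S) (x : n → 𝕜) :
    HasSum (fun k => star x ⬝ᵥ A k *ᵥ x) (star x ⬝ᵥ S *ᵥ x) := by
  simp only [dotProduct, mulVec]
  refine hasSum_sum fun i _ => (hasSum_sum fun j _ => ?_).mul_left _
  exact (Pi.hasSum.1 (Pi.hasSum.1 hA i) j).mul_right _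

theorem PosDef.of_hasSum [RCLike 𝕜] {A : ι → Matrix n n 𝕜} {S : Matrix n n 𝕜}
    (hA : HasSum A S) (i : ι) (hAi : (A i).PosDef) (hA_nonneg : ∀ k, (A k).PosSemidef) :
    S.PosDef := by
  refine posDef_iff_dotProduct_mulVec.2 ⟨?_, fun x hx => ?_⟩
  · have hA_herm : HasSum (fun k => (A k)ᴴ) S := by
      simpa only [fun k => (hA_nonneg k).isHermitian.eq] using hA
    exact hA.matrix_conjTranspose.unique hA_herm
  · exact (hAi.dotProduct_mulVec_pos hx).trans_le <|
      le_hasSum (hasSum_star_dotProduct_mulVec hA x) i fun k _ =>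
        (hA_nonneg k).dotProduct_mulVec_nonneg x

theorem hasSum_diagonal_pow_mul_mul_diagonal_pow [NormedField 𝕜] [CompleteSpace 𝕜]
    [DecidableEq n] {ρ : n → 𝕜} (hρ : ∀ i j, ‖ρ i * ρ j‖ < 1) (V : Matrix n n 𝕜) :
    HasSum (fun k => diagonal ρ ^ k * V * diagonal ρ ^ k)
      (of fun i j => V i j / (1 - ρ i * ρ j)) := by
  refine Pi.hasSum.2 fun i => Pi.hasSum.2 fun j => ?_
  rw [of_apply, div_eq_mul_inv]
  refine ((hasSum_geometric_of_norm_lt_one (hρ i j)).mul_left (V i j)).congr_fun fun k => ?_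
  simp only [diagonal_pow, diagonal_mul, mul_diagonal, Pi.pow_apply, mul_pow]
  ring

end Matrix

/-- Non-reversible diagonal-F parameterization: given |ρᵢ| < 1 and V symmetric positive
definite, the matrix S with entries S_{ij} = V_{ij}/(1 − ρᵢρⱼ) is positive definite and
satisfies S − diag(ρ) S diag(ρ) = V. -/
theorem iwar_diagonalF_marginal_scale {q : ℕ} (ρ : Fin q → ℝ) (hρ : ∀ i, |ρ i| < 1)
    (V : Matrix (Fin q) (Fin q) ℝ) (hV : V.PosDef)
    (S : Matrix (Fin q) (Fin q) ℝ)
    (hS : ∀ i j, S i j = V i j / (1 - ρ i * ρ j)) :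
    S.PosDef ∧ S - Matrix.diagonal ρ * S * Matrix.diagonal ρ = V := by
  have hρρ : ∀ i j, ‖ρ i * ρ j‖ < 1 := fun i j => by
    rw [norm_mul, Real.norm_eq_abs, Real.norm_eq_abs]
    exact mul_lt_one_of_nonneg_of_lt_one_left (abs_nonneg _) (hρ i) (hρ j).le
  obtain rfl : S = of fun i j => V i j / (1 - ρ i * ρ j) := ext hS
  constructor
  · refine PosDef.of_hasSum (hasSum_diagonal_pow_mul_mul_diagonal_pow hρρ V) 0
      (by simpa using hV) fun k => ?_
    simpa using hV.posSemidef.conjTranspose_mul_mul_same (diagonal ρ ^ k)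
  · ext i j
    have hne : 1 - ρ i * ρ j ≠ 0 :=
      sub_ne_zero.2 (ne_of_gt (lt_of_abs_lt (by simpa using hρρ i j)))
    simp only [Matrix.sub_apply, diagonal_mul, mul_diagonal, of_apply]
    field_simp
end

section
/- Fix q ≥ 1, n > 0, let c = n/(n+q), let R = diag(ρ₁,…,ρ_q) and Q = diag(ξ₁,…,ξ_q) be real diagonal matrices with ξᵢ > 0, and let Θ = diag(θ) for a real vector θ. Then the matrix R Θ R + c·(1 + Σᵢ θᵢ/(n ξᵢ))·Q (I − R²) is diagonal, and its diagonal vector equals α + B θ, where α = c (I − R²) ξ, B = n⁻¹ c (I − R²) ξ ξ₋₁ᵀ + R², ξ = (ξ₁,…,ξ_q)ᵀ and ξ₋₁ = (1/ξ₁,…,1/ξ_q)ᵀ. -/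
open Matrix

/-- Principal component IW-AR conditional-mean step: with R = diag(ρ), Q = diag(ξ),
Θ = diag(θ), c = n/(n+q), α = c (I − R²) ξ and B = n⁻¹ c (I − R²) ξ ξ₋₁ᵀ + R², the matrix
R Θ R + c (1 + Σᵢ θᵢ/(n ξᵢ)) Q (I − R²) is diagonal with diagonal vector α + B θ. -/
theorem iwar_principal_component_step {q : ℕ} (hq : 1 ≤ q) (n : ℝ) (hn : 0 < n)
    (c : ℝ) (hc : c = n / (n + q))
    (ρ ξ θ : Fin q → ℝ) (hξ : ∀ i, 0 < ξ i)
    (R Q Θ B : Matrix (Fin q) (Fin q) ℝ) (α : Fin q → ℝ)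
    (hR : R = Matrix.diagonal ρ) (hQ : Q = Matrix.diagonal ξ)
    (hΘ : Θ = Matrix.diagonal θ)
    (hα : α = c • ((1 - R ^ 2) *ᵥ ξ))
    (hB : B = (n⁻¹ * c) • ((1 - R ^ 2) * Matrix.vecMulVec ξ (fun j => (ξ j)⁻¹)) + R ^ 2) :
    R * Θ * R + (c * (1 + ∑ i, θ i / (n * ξ i))) • (Q * (1 - R ^ 2))
      = Matrix.diagonal (α + B *ᵥ θ) := by
  subst hR hQ hΘ hα hB
  have hsq : (Matrix.diagonal ρ) ^ 2 = Matrix.diagonal (fun i => ρ i ^ 2) := by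
    rw [sq, Matrix.diagonal_mul_diagonal]; congr 1; funext i; ring
  have h2 : (1 : Matrix (Fin q) (Fin q) ℝ) - (Matrix.diagonal ρ) ^ 2
      = Matrix.diagonal (fun i => 1 - ρ i ^ 2) := by
    rw [hsq, ← Matrix.diagonal_one, ← Matrix.diagonal_sub]
  rw [h2, hsq]
  ext i j
  simp [Matrix.mul_apply, Matrix.mulVec, Matrix.diagonal, Matrix.vecMulVec, dotProduct,
    Finset.mul_sum, mul_comm, mul_assoc, mul_left_comm]
  by_cases h : i = j
  · subst h
    simp [Finset.sum_ite_eq, Finset.mul_sum]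
    have hsum : ∑ x, θ x / (n * ξ x) = ∑ x, n⁻¹ * ((ξ x)⁻¹ * θ x) := by
      apply Finset.sum_congr rfl; intro x _
      field_simp
    rw [hsum]
    have hmain : ∑ x : Fin q, θ x * (c * (ξ i * (n⁻¹ * ((ξ x)⁻¹ * (1 - ρ i ^ 2)))) + if i = x then ρ i ^ 2 else 0)
        = c * ξ i * (1 - ρ i ^ 2) * ∑ x : Fin q, n⁻¹ * ((ξ x)⁻¹ * θ x) + θ i * ρ i ^ 2 := by
      simp only [mul_add, mul_ite, mul_zero, Finset.sum_add_distrib, Finset.sum_ite_eq,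
        Finset.mem_univ, if_true, Finset.mul_sum]
      congr 1
      exact Finset.sum_congr rfl (fun x _ => by ring)
    rw [hmain]
    ring
  · simp [h]
end

section
/- Let S and F be real q×q matrices with S symmetric invertible, and let S₃ be the 3q×3q block matrix with block rows [S, S Fᵀ, S (F²)ᵀ], [F S, S, S Fᵀ], and [F² S, F S, S]. Then det S₃ = det S · (det (S − F S Fᵀ))². -/
open Matrix

/-- The 3q×3q IW-AR(2) scale matrix with block rows [S, SFᵀ, S(F²)ᵀ], [FS, S, SFᵀ],
[F²S, FS, S]. -/
noncomputable def iwar2ScaleMatrix {q : ℕ} (S F : Matrix (Fin q) (Fin q) ℝ) :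
    Matrix (Fin q ⊕ (Fin q ⊕ Fin q)) (Fin q ⊕ (Fin q ⊕ Fin q)) ℝ :=
  Matrix.fromBlocks S (Matrix.fromCols (S * Fᵀ) (S * (F ^ 2)ᵀ))
    (Matrix.fromRows (F * S) (F ^ 2 * S))
    (Matrix.fromBlocks S (S * Fᵀ) (F * S) S)

/-!
Left multiplication by the block-unitriangular matrix sending `(X₀, X₁, X₂)` to the AR(1)
innovations `(X₀, X₁ - F X₀, X₂ - F X₁)` has determinant one and turns the scale matrix into a
block upper triangular matrix with diagonal blocks `S`, `S - F S Fᵀ`, `S - F S Fᵀ`.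
-/

theorem Matrix.fromRows_add_fromRows {α m₁ m₂ n : Type*} [Add α] (A₁ B₁ : Matrix m₁ n α)
    (A₂ B₂ : Matrix m₂ n α) :
    fromRows A₁ A₂ + fromRows B₁ B₂ = fromRows (A₁ + B₁) (A₂ + B₂) := by
  ext (_ | _) _ <;> rfl

section

variable {R n : Type*} [CommRing R] [Fintype n] [DecidableEq n]

def ar1InnovationMatrix (F : Matrix n n R) : Matrix (n ⊕ (n ⊕ n)) (n ⊕ (n ⊕ n)) R :=
  fromBlocks 1 0 (fromRows (-F) 0) (fromBlocks 1 0 (-F) 1)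

theorem det_ar1InnovationMatrix (F : Matrix n n R) : (ar1InnovationMatrix F).det = 1 := by
  simp [ar1InnovationMatrix, det_fromBlocks_zero₁₂]

end

theorem ar1InnovationMatrix_mul_iwar2ScaleMatrix {q : ℕ} (S F : Matrix (Fin q) (Fin q) ℝ) :
    ar1InnovationMatrix F * iwar2ScaleMatrix S F =
      fromBlocks S (fromCols (S * Fᵀ) (S * (F ^ 2)ᵀ)) 0
        (fromBlocks (S - F * S * Fᵀ) ((S - F * S * Fᵀ) * Fᵀ) 0 (S - F * S * Fᵀ)) := by
  simp only [ar1InnovationMatrix, iwar2ScaleMatrix, fromBlocks_multiply, fromBlocks_mul_fromRows,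
    fromRows_mul, mul_fromCols, Matrix.one_mul, Matrix.zero_mul, add_zero]
  simp only [fromRows_add_fromRows, fromCols_fromRows_eq_fromBlocks, fromBlocks_add,
    fromBlocks_inj, ← fromRows_zero, fromRows_ext_iff, sq, transpose_mul]
  refine ⟨trivial, trivial, ⟨?_, ?_⟩, ?_, ?_, ?_, ?_⟩ <;> noncomm_ring

theorem iwar2_scale_det_general {q : ℕ} (S F : Matrix (Fin q) (Fin q) ℝ) :
    (iwar2ScaleMatrix S F).det = S.det * (S - F * S * Fᵀ).det ^ 2 := by
  rw [← one_mul (iwar2ScaleMatrix S F).det, ← det_ar1InnovationMatrix F, ← det_mul,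
    ar1InnovationMatrix_mul_iwar2ScaleMatrix, det_fromBlocks_zero₂₁, det_fromBlocks_zero₂₁, sq]

/-- Determinant identity for the IW-AR(2) scale matrix:
det S₃ = det S · (det (S − F S Fᵀ))². -/
theorem iwar2_scale_det {q : ℕ} (S F : Matrix (Fin q) (Fin q) ℝ)
    (hS : S.IsSymm) (hinv : IsUnit S.det) :
    (iwar2ScaleMatrix S F).det = S.det * (S - F * S * Fᵀ).det ^ 2 :=
  iwar2_scale_det_general S F
end

section
/- Let S and F be real q×q matrices with S symmetric, and let S₃ be the 3q×3q block matrix with block rows [S, S Fᵀ, S (F²)ᵀ], [F S, S, S Fᵀ], and [F² S, F S, S]. Then S₃ is positive definite if and only if both S and S − F S Fᵀ are positive definite. -/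
/-!
With `V = S - F S Fᵀ`, the scale matrix factors as `S₃ = L · diag(S, V, V) · Lᵀ`, where `L` is
the block unit lower triangular matrix with block rows `[1, 0, 0]`, `[F, 1, 0]`, `[F², F, 1]`.
Since `L` is invertible, congruence by `L` preserves positive definiteness, and a block diagonal
matrix is positive definite iff its diagonal blocks are.
-/

open Matrix

section BlockDiagonal

variable {m n R : Type*} [Fintype m] [Fintype n] [Ring R] [StarRing R]

theorem star_sumElim_dotProduct_fromBlocks_zero_mulVec (A : Matrix m m R) (D : Matrix n n R)
    (u : m → R) (v : n → R) :
    star (Sum.elim u v) ⬝ᵥ fromBlocks A 0 0 D *ᵥ Sum.elim u v =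
      star u ⬝ᵥ A *ᵥ u + star v ⬝ᵥ D *ᵥ v := by
  simp [fromBlocks_mulVec, Function.star_sumElim, sumElim_dotProduct_sumElim]

theorem posDef_fromBlocks_zero_iff [PartialOrder R] [AddLeftMono R]
    {A : Matrix m m R} {D : Matrix n n R} :
    (fromBlocks A 0 0 D).PosDef ↔ A.PosDef ∧ D.PosDef := by
  refine ⟨fun h => ⟨h.submatrix Sum.inl_injective, h.submatrix Sum.inr_injective⟩,
    fun ⟨hA, hD⟩ => ?_⟩
  refine posDef_iff_dotProduct_mulVec.mpr
    ⟨isHermitian_fromBlocks_iff.mpr ⟨hA.1, by simp, by simp, hD.1⟩, fun x hx => ?_⟩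
  rw [← Sum.elim_comp_inl_inr x, star_sumElim_dotProduct_fromBlocks_zero_mulVec]
  by_cases hu : x ∘ Sum.inl = 0
  · have hv : x ∘ Sum.inr ≠ 0 := fun hv => hx <| by
      rw [← Sum.elim_comp_inl_inr x, hu, hv, Sum.elim_zero_zero]
    simpa [hu] using hD.dotProduct_mulVec_pos hv
  · exact add_pos_of_pos_of_nonneg (hA.dotProduct_mulVec_pos hu)
      (hD.posSemidef.dotProduct_mulVec_nonneg _)

end BlockDiagonal

section LDLT

variable {q : ℕ} (S F : Matrix (Fin q) (Fin q) ℝ)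

noncomputable def iwar2LowerFactor :
    Matrix (Fin q ⊕ (Fin q ⊕ Fin q)) (Fin q ⊕ (Fin q ⊕ Fin q)) ℝ :=
  fromBlocks 1 0 (fromRows F (F ^ 2)) (fromBlocks 1 0 F 1)

theorem isUnit_iwar2LowerFactor : IsUnit (iwar2LowerFactor F) := by
  simp [isUnit_iff_isUnit_det, iwar2LowerFactor, det_fromBlocks_zero₁₂]

theorem iwar2ScaleMatrix_eq_lowerFactor_mul_mul_transpose :
    iwar2ScaleMatrix S F = iwar2LowerFactor F *
      fromBlocks S 0 0 (fromBlocks (S - F * S * Fᵀ) 0 0 (S - F * S * Fᵀ)) *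
        (iwar2LowerFactor F)ᵀ := by
  simp only [iwar2ScaleMatrix, iwar2LowerFactor, fromBlocks_transpose, fromBlocks_multiply,
    transpose_fromRows, fromRows_mul, mul_fromCols, transpose_one, transpose_zero, transpose_pow,
    Matrix.one_mul, Matrix.mul_one, Matrix.zero_mul, Matrix.mul_zero, add_zero, zero_add,
    fromCols_fromRows_eq_fromBlocks, fromBlocks_add]
  congr 2 <;> noncomm_ring

end LDLT

theorem iwar2_scale_posDef_iff_general {q : ℕ} (S F : Matrix (Fin q) (Fin q) ℝ) :
    (iwar2ScaleMatrix S F).PosDef ↔ S.PosDef ∧ (S - F * S * Fᵀ).PosDef := by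
  have hL : (iwar2LowerFactor F)ᵀ = star (iwar2LowerFactor F) :=
    (conjTranspose_eq_transpose_of_trivial _).symm
  rw [iwar2ScaleMatrix_eq_lowerFactor_mul_mul_transpose, hL,
    (isUnit_iwar2LowerFactor F).posDef_star_right_conjugate_iff,
    posDef_fromBlocks_zero_iff, posDef_fromBlocks_zero_iff, and_self]

/-- Positive definiteness of the IW-AR(2) scale matrix: S₃ is positive definite iff
both S and S − F S Fᵀ are positive definite. -/
theorem iwar2_scale_posDef_iff {q : ℕ} (S F : Matrix (Fin q) (Fin q) ℝ)
    (hS : S.IsSymm) :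
    (iwar2ScaleMatrix S F).PosDef ↔ S.PosDef ∧ (S - F * S * Fᵀ).PosDef :=
  iwar2_scale_posDef_iff_general S F
end
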